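/- Let (u, v, φ) be a local solution on [0,T] of the hyperbolic–parabolic chemotaxis system on a network. Then there exists a constant C > 0, depending only on the parameters of the problem, such that Σ_i ( sup_{t∈[0,T]} ‖∂_{xx} φ_i(t)‖₂² + sup_{t∈[0,T]} ‖∂_x φ_i(t)‖₂² ) ≤ C Σ_i ( sup_{t∈[0,T]} ‖∂_t φ_i(t)‖₂² + sup_{t∈[0,T]} ‖u_i(t)‖₂² ). -/

import Mathlib

open Finset intervalIntegral MeasureTheory

noncomputable section

/-! ### Partial derivatives (functions of time and space are written `f t x`) -/

/-- Spatial partial derivative `∂_x f` at `(t, x)`. -/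
def pdx (f : ℝ → ℝ → ℝ) (t x : ℝ) : ℝ := deriv (f t) x

/-- Time partial derivative `∂_t f` at `(t, x)`. -/
def pdt (f : ℝ → ℝ → ℝ) (t x : ℝ) : ℝ := deriv (fun s => f s x) t

/-- Second spatial derivative `∂_{xx} f` at `(t, x)`. -/
def pdxx (f : ℝ → ℝ → ℝ) (t x : ℝ) : ℝ := deriv (deriv (f t)) x

/-- Mixed derivative `∂_{xt} f = ∂_t ∂_x f` at `(t, x)`. -/
def pdxt (f : ℝ → ℝ → ℝ) (t x : ℝ) : ℝ := deriv (fun s => deriv (f s) x) t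

/-! ### Squared Sobolev norms on an interval `(0, ℓ)` -/

/-- Square of the `L²(0,ℓ)` norm. -/
def L2sq (ℓ : ℝ) (f : ℝ → ℝ) : ℝ := ∫ x in (0:ℝ)..ℓ, (f x) ^ 2

/-- Square of the `H¹(0,ℓ)` norm. -/
def H1sq (ℓ : ℝ) (f : ℝ → ℝ) : ℝ := L2sq ℓ f + L2sq ℓ (deriv f)

/-- Square of the `H²(0,ℓ)` norm. -/
def H2sq (ℓ : ℝ) (f : ℝ → ℝ) : ℝ := H1sq ℓ f + L2sq ℓ (deriv (deriv f))

/-- `L²(0,ℓ)` norm. -/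
def L2n (ℓ : ℝ) (f : ℝ → ℝ) : ℝ := Real.sqrt (L2sq ℓ f)

/-- `H¹(0,ℓ)` norm. -/
def H1n (ℓ : ℝ) (f : ℝ → ℝ) : ℝ := Real.sqrt (H1sq ℓ f)

/-- `H²(0,ℓ)` norm. -/
def H2n (ℓ : ℝ) (f : ℝ → ℝ) : ℝ := Real.sqrt (H2sq ℓ f)

/-- Supremum of `g` over the time interval `[0, T]`. -/
def supIcc (T : ℝ) (g : ℝ → ℝ) : ℝ := sSup (g '' Set.Icc 0 T)

/-! ### Oriented networks -/

/-- An oriented network with nodes indexed by `P` and arcs indexed by `M`.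
Arc `i` is parametrized by the compact interval `[0, len i]`; `first i`
(resp. `last i`) is the node sitting at the endpoint `x = 0` (resp. `x = len i`)
of the arc, `none` meaning that this endpoint is an outer boundary vertex.
An arc `i` is *incoming* at the node `ν` if `last i = some ν`, and *outgoing*
if `first i = some ν`. -/
structure Network (P M : Type) where
  len : M → ℝ
  len_pos : ∀ i, 0 < len i
  first : M → Option P
  last : M → Option P
  no_loop : ∀ i ν, ¬ (first i = some ν ∧ last i = some ν)

namespace Network

variable {P M : Type} [Fintype P] [Fintype M] [DecidableEq P] [DecidableEq M]

/-- The set `M^ν` of arcs incident to the node `ν`. -/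
def incident (G : Network P M) (ν : P) : Finset M :=
  Finset.univ.filter fun i => G.first i = some ν ∨ G.last i = some ν

/-- Trace at the node `ν` of a family `f` of functions on the arcs. -/
def trace (G : Network P M) (f : M → ℝ → ℝ) (ν : P) (j : M) : ℝ :=
  if G.last j = some ν then f j (G.len j) else f j 0

/-- Transmission conditions at the nodes for the hyperbolic unknowns `(u, v)`,
with transmission coefficients `K ν i j`. -/
def HypNode (G : Network P M) (lam : M → ℝ) (K : P → M → M → ℝ)
    (u v : M → ℝ → ℝ) : Prop :=
  ∀ ν : P,
    (∀ i ∈ G.incident ν, G.last i = some ν →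
      -(lam i * v i (G.len i)) =
        ∑ j ∈ G.incident ν, K ν i j * (G.trace u ν j - G.trace u ν i)) ∧
    (∀ i ∈ G.incident ν, G.first i = some ν →
      lam i * v i 0 =
        ∑ j ∈ G.incident ν, K ν i j * (G.trace u ν j - G.trace u ν i))

/-- Kedem–Katchalsky transmission conditions at the nodes for the parabolic
unknown `φ`, with transmission coefficients `α ν i j`. -/
def ParNode (G : Network P M) (D : M → ℝ) (α : P → M → M → ℝ)
    (φ : M → ℝ → ℝ) : Prop :=
  ∀ ν : P,
    (∀ i ∈ G.incident ν, G.last i = some ν →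
      D i * deriv (φ i) (G.len i) =
        ∑ j ∈ G.incident ν, α ν i j * (G.trace φ ν j - G.trace φ ν i)) ∧
    (∀ i ∈ G.incident ν, G.first i = some ν →
      -(D i * deriv (φ i) 0) =
        ∑ j ∈ G.incident ν, α ν i j * (G.trace φ ν j - G.trace φ ν i))

/-- Null condition for `v` at the outer boundary vertices of the network. -/
def OuterZero (G : Network P M) (v : M → ℝ → ℝ) : Prop :=
  ∀ i, (G.first i = none → v i 0 = 0) ∧ (G.last i = none → v i (G.len i) = 0)

/-- `(u, v, φ)` is a (classical, smooth) solution of the hyperbolic–parabolic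
chemotaxis system on the network `G` for times in the set `S`:
`∂_t u_i + λ_i ∂_x v_i = 0`, `∂_t v_i + λ_i ∂_x u_i = u_i ∂_x φ_i - β_i v_i`,
`∂_t φ_i = D_i ∂_{xx} φ_i + a u_i - b φ_i` on each arc, with null-flux boundary
conditions at the outer vertices and the transmission conditions at the nodes.
Functions are written `u i t x`. -/
structure IsSolution (G : Network P M) (lam beta D : M → ℝ) (a b : ℝ)
    (K α : P → M → M → ℝ) (S : Set ℝ) (u v φ : M → ℝ → ℝ → ℝ) : Prop where
  reg_u : ∀ i, ContDiff ℝ 1 (Function.uncurry (u i))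
  reg_v : ∀ i, ContDiff ℝ 1 (Function.uncurry (v i))
  reg_φ : ∀ i, ContDiff ℝ 2 (Function.uncurry (φ i))
  eq_u : ∀ i, ∀ t ∈ S, ∀ x ∈ Set.Icc 0 (G.len i),
    pdt (u i) t x + lam i * pdx (v i) t x = 0
  eq_v : ∀ i, ∀ t ∈ S, ∀ x ∈ Set.Icc 0 (G.len i),
    pdt (v i) t x + lam i * pdx (u i) t x = u i t x * pdx (φ i) t x - beta i * v i t x
  eq_φ : ∀ i, ∀ t ∈ S, ∀ x ∈ Set.Icc 0 (G.len i),
    pdt (φ i) t x = D i * pdxx (φ i) t x + a * u i t x - b * φ i t x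
  bc_v : ∀ t ∈ S, G.OuterZero fun i => v i t
  bc_φ : ∀ t ∈ S, G.OuterZero fun i => deriv (φ i t)
  node_uv : ∀ t ∈ S, G.HypNode lam K (fun i => u i t) fun i => v i t
  node_φ : ∀ t ∈ S, G.ParNode D α fun i => φ i t

end Network

end

/-!
At every fixed time `t`, each `φ_i(t)` solves the elliptic equation
`D_i φ_i'' = (∂_t φ_i - a u_i) + b φ_i` on its arc, with null flux at the outer vertices and
Kedem–Katchalsky conditions at the nodes. Testing with `φ_i`, integrating by parts and summing over
the arcs, the boundary terms collect node by node into the quadratic form of a symmetric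
nonnegatively weighted Laplacian in the traces, which is nonpositive. Young's inequality then
bounds `‖φ‖₂` and `‖∂_x φ‖₂` by the source `∂_t φ - a u`, and the equation itself bounds
`‖∂_{xx} φ‖₂`. These bounds hold at each time, so they pass to the suprema over `[0, T]`.
-/

section IntervalL2

variable {ℓ : ℝ}

theorem L2sq_nonneg (hℓ : 0 ≤ ℓ) (f : ℝ → ℝ) : 0 ≤ L2sq ℓ f :=
  intervalIntegral.integral_nonneg hℓ fun _ _ => sq_nonneg _

theorem L2sq_congr (hℓ : 0 ≤ ℓ) {f g : ℝ → ℝ} (hfg : Set.EqOn f g (Set.Icc 0 ℓ)) :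
    L2sq ℓ f = L2sq ℓ g :=
  intervalIntegral.integral_congr fun x hx => by
    rw [Set.uIcc_of_le hℓ] at hx
    simp only [hfg hx]

theorem L2sq_const_mul (c : ℝ) (f : ℝ → ℝ) :
    L2sq ℓ (fun x => c * f x) = c ^ 2 * L2sq ℓ f := by
  simp only [L2sq, mul_pow, intervalIntegral.integral_const_mul]

theorem integral_le_L2sq_combination (hℓ : 0 ≤ ℓ) {F f g : ℝ → ℝ} (p q : ℝ) (hF : Continuous F)
    (hf : Continuous f) (hg : Continuous g) (hle : ∀ x, F x ≤ p * f x ^ 2 + q * g x ^ 2) :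
    ∫ x in (0:ℝ)..ℓ, F x ≤ p * L2sq ℓ f + q * L2sq ℓ g := by
  have hint := intervalIntegral.integral_mono_on hℓ (hF.intervalIntegrable 0 ℓ)
    (Continuous.intervalIntegrable (μ := volume) (by fun_prop) 0 ℓ) fun x _ => hle x
  rwa [intervalIntegral.integral_add (Continuous.intervalIntegrable (by fun_prop) 0 ℓ)
    (Continuous.intervalIntegrable (by fun_prop) 0 ℓ), intervalIntegral.integral_const_mul,
    intervalIntegral.integral_const_mul] at hint

theorem L2sq_add_le (hℓ : 0 ≤ ℓ) {f g : ℝ → ℝ} (hf : Continuous f) (hg : Continuous g) :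
    L2sq ℓ (fun x => f x + g x) ≤ 2 * L2sq ℓ f + 2 * L2sq ℓ g :=
  integral_le_L2sq_combination hℓ 2 2 (by fun_prop) hf hg fun x => by
    nlinarith [sq_nonneg (f x - g x)]

theorem L2sq_sub_le (hℓ : 0 ≤ ℓ) {f g : ℝ → ℝ} (hf : Continuous f) (hg : Continuous g) :
    L2sq ℓ (fun x => f x - g x) ≤ 2 * L2sq ℓ f + 2 * L2sq ℓ g :=
  integral_le_L2sq_combination hℓ 2 2 (by fun_prop) hf hg fun x => by
    nlinarith [sq_nonneg (f x + g x)]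

theorem neg_integral_mul_le (hℓ : 0 ≤ ℓ) {ε : ℝ} (hε : 0 < ε) {f g : ℝ → ℝ}
    (hf : Continuous f) (hg : Continuous g) :
    -∫ x in (0:ℝ)..ℓ, f x * g x ≤ (2 * ε)⁻¹ * L2sq ℓ f + ε / 2 * L2sq ℓ g := by
  rw [← intervalIntegral.integral_neg]
  refine integral_le_L2sq_combination hℓ _ _ (by fun_prop) hf hg fun x => ?_
  have hsq : 0 ≤ (2 * ε)⁻¹ * (f x + ε * g x) ^ 2 := by positivity
  have hexp : (2 * ε)⁻¹ * (f x + ε * g x) ^ 2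
      = (2 * ε)⁻¹ * f x ^ 2 + ε / 2 * g x ^ 2 + f x * g x := by
    field_simp
    ring
  linarith

theorem integral_deriv_deriv_mul_self {ψ : ℝ → ℝ} (hψ : ContDiff ℝ 2 ψ) :
    ∫ x in (0:ℝ)..ℓ, deriv (deriv ψ) x * ψ x
      = deriv ψ ℓ * ψ ℓ - deriv ψ 0 * ψ 0 - L2sq ℓ (deriv ψ) := by
  have hψ' : ContDiff ℝ 1 (deriv ψ) := hψ.deriv'
  have hibp := intervalIntegral.integral_mul_deriv_eq_deriv_mul (a := 0) (b := ℓ)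
    (fun x _ => ((hψ.differentiable (by norm_num)) x).hasDerivAt)
    (fun x _ => ((hψ'.differentiable one_ne_zero) x).hasDerivAt)
    (hψ'.continuous.intervalIntegrable 0 ℓ) ((hψ'.continuous_deriv le_rfl).intervalIntegrable 0 ℓ)
  simp only [L2sq, sq]
  rw [intervalIntegral.integral_congr fun x _ => mul_comm (deriv (deriv ψ) x) (ψ x), hibp]
  ring

end IntervalL2

section ArcEnergy

variable {ℓ D b : ℝ} {ψ h : ℝ → ℝ}

theorem energy_le_flux (hℓ : 0 ≤ ℓ) (hb : 0 < b) (hψ : ContDiff ℝ 2 ψ) (hh : Continuous h)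
    (hode : ∀ x ∈ Set.Icc 0 ℓ, D * deriv (deriv ψ) x = h x + b * ψ x) :
    D * L2sq ℓ (deriv ψ) + b / 2 * L2sq ℓ ψ
      ≤ (2 * b)⁻¹ * L2sq ℓ h + (D * deriv ψ ℓ * ψ ℓ - D * deriv ψ 0 * ψ 0) := by
  have hcψ : Continuous ψ := hψ.continuous
  have htested : ∫ x in (0:ℝ)..ℓ, h x * ψ x + b * ψ x ^ 2
      = ∫ x in (0:ℝ)..ℓ, D * (deriv (deriv ψ) x * ψ x) := by
    refine intervalIntegral.integral_congr fun x hx => ?_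
    rw [Set.uIcc_of_le hℓ] at hx
    simp only [← mul_assoc, hode x hx]
    ring
  rw [intervalIntegral.integral_add (Continuous.intervalIntegrable (by fun_prop) 0 ℓ)
    (Continuous.intervalIntegrable (by fun_prop) 0 ℓ), intervalIntegral.integral_const_mul,
    intervalIntegral.integral_const_mul, integral_deriv_deriv_mul_self hψ] at htested
  have hyoung := neg_integral_mul_le hℓ hb hh hcψ
  simp only [L2sq] at htested hyoung ⊢
  linear_combination htested + hyoung

theorem sq_mul_L2sq_deriv_deriv_le (hℓ : 0 ≤ ℓ) (hψ : Continuous ψ) (hh : Continuous h)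
    (hode : ∀ x ∈ Set.Icc 0 ℓ, D * deriv (deriv ψ) x = h x + b * ψ x) :
    D ^ 2 * L2sq ℓ (deriv (deriv ψ)) ≤ 2 * L2sq ℓ h + 2 * b ^ 2 * L2sq ℓ ψ := by
  rw [← L2sq_const_mul, L2sq_congr hℓ hode, mul_assoc 2, ← L2sq_const_mul]
  exact L2sq_add_le hℓ hh (continuous_const.mul hψ)

end ArcEnergy

/-- Twice the left-hand side is `-∑ i ∈ s, ∑ j ∈ s, A i j * (x j - x i) ^ 2`. -/
theorem sum_laplacian_mul_self_nonpos {ι : Type*} (s : Finset ι) {A : ι → ι → ℝ}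
    (hsym : ∀ i j, A i j = A j i) (hnn : ∀ i j, 0 ≤ A i j) (x : ι → ℝ) :
    ∑ i ∈ s, (∑ j ∈ s, A i j * (x j - x i)) * x i ≤ 0 := by
  have hswap : ∑ i ∈ s, ∑ j ∈ s, A i j * (x j - x i) * x i
      = ∑ i ∈ s, ∑ j ∈ s, A i j * (x i - x j) * x j := by
    rw [Finset.sum_comm]
    simp only [hsym]
  have htwice : 2 * ∑ i ∈ s, (∑ j ∈ s, A i j * (x j - x i)) * x i
      = -∑ i ∈ s, ∑ j ∈ s, A i j * (x j - x i) ^ 2 := by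
    simp only [Finset.sum_mul]
    rw [two_mul]
    nth_rw 2 [hswap]
    simp only [← Finset.sum_add_distrib, ← Finset.sum_neg_distrib]
    exact Finset.sum_congr rfl fun i _ => Finset.sum_congr rfl fun j _ => by ring
  have hsq : 0 ≤ ∑ i ∈ s, ∑ j ∈ s, A i j * (x j - x i) ^ 2 :=
    Finset.sum_nonneg fun i _ => Finset.sum_nonneg fun j _ => mul_nonneg (hnn i j) (sq_nonneg _)
  linarith

namespace Network

variable {P M : Type} [Fintype P] [Fintype M] [DecidableEq P] (G : Network P M)

theorem sum_sum_incident (g : P → M → ℝ) :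
    ∑ ν, ∑ i ∈ G.incident ν, g ν i
      = ∑ i, ((G.first i).elim 0 (g · i) + (G.last i).elim 0 (g · i)) := by
  simp only [incident, Finset.sum_filter]
  rw [Finset.sum_comm]
  refine Finset.sum_congr rfl fun i _ => ?_
  rcases hfirst : G.first i with _ | ν₀ <;> rcases hlast : G.last i with _ | ν₁
  · simp
  · simp
  · simp
  · have hne : ν₀ ≠ ν₁ := by
      rintro rfl
      exact G.no_loop i ν₀ ⟨hfirst, hlast⟩
    calc ∑ ν, (if some ν₀ = some ν ∨ some ν₁ = some ν then g ν i else 0)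
        = ∑ ν, ((if ν₀ = ν then g ν i else 0) + if ν₁ = ν then g ν i else 0) :=
          Finset.sum_congr rfl fun ν _ => by split_ifs <;> simp_all
      _ = g ν₀ i + g ν₁ i := by simp [Finset.sum_add_distrib]

theorem sum_flux_mul_nonpos {D : M → ℝ} {α : P → M → M → ℝ}
    (hαsym : ∀ ν i j, α ν i j = α ν j i) (hαnn : ∀ ν i j, 0 ≤ α ν i j) {ψ : M → ℝ → ℝ}
    (hbc : G.OuterZero fun i => deriv (ψ i)) (hnode : G.ParNode D α ψ) :
    ∑ i, (D i * deriv (ψ i) (G.len i) * ψ i (G.len i) - D i * deriv (ψ i) 0 * ψ i 0) ≤ 0 := by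
  set g : P → M → ℝ := fun ν i =>
    (∑ j ∈ G.incident ν, α ν i j * (G.trace ψ ν j - G.trace ψ ν i)) * G.trace ψ ν i
  have hfirst : ∀ i, -(D i * deriv (ψ i) 0 * ψ i 0) = (G.first i).elim 0 (g · i) := by
    intro i
    rcases hf : G.first i with _ | ν
    · simp [(hbc i).1 hf]
    · have hnl : G.last i ≠ some ν := fun hl => G.no_loop i ν ⟨hf, hl⟩
      have hmem : i ∈ G.incident ν := Finset.mem_filter.2 ⟨Finset.mem_univ i, Or.inl hf⟩
      have htrace : G.trace ψ ν i = ψ i 0 := if_neg hnl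
      simp only [Option.elim, g]
      rw [← (hnode ν).2 i hmem hf, htrace]
      ring
  have hlast : ∀ i, D i * deriv (ψ i) (G.len i) * ψ i (G.len i) = (G.last i).elim 0 (g · i) := by
    intro i
    rcases hl : G.last i with _ | ν
    · simp [(hbc i).2 hl]
    · have hmem : i ∈ G.incident ν := Finset.mem_filter.2 ⟨Finset.mem_univ i, Or.inr hl⟩
      have htrace : G.trace ψ ν i = ψ i (G.len i) := if_pos hl
      simp only [Option.elim, g]
      rw [← (hnode ν).1 i hmem hl, htrace]
  calc ∑ i, (D i * deriv (ψ i) (G.len i) * ψ i (G.len i) - D i * deriv (ψ i) 0 * ψ i 0)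
      = ∑ ν, ∑ i ∈ G.incident ν, g ν i := by
        rw [sum_sum_incident]
        exact Finset.sum_congr rfl fun i _ => by rw [← hfirst, ← hlast]; ring
    _ ≤ 0 := Finset.sum_nonpos fun ν _ =>
        sum_laplacian_mul_self_nonpos _ (hαsym ν) (hαnn ν) (G.trace ψ ν)

variable {D : M → ℝ} {b : ℝ} {α : P → M → M → ℝ} {ψ h : M → ℝ → ℝ}

theorem sum_energy_le (hb : 0 < b) (hαsym : ∀ ν i j, α ν i j = α ν j i)
    (hαnn : ∀ ν i j, 0 ≤ α ν i j) (hψ : ∀ i, ContDiff ℝ 2 (ψ i)) (hh : ∀ i, Continuous (h i))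
    (hode : ∀ i, ∀ x ∈ Set.Icc 0 (G.len i), D i * deriv (deriv (ψ i)) x = h i x + b * ψ i x)
    (hbc : G.OuterZero fun i => deriv (ψ i)) (hnode : G.ParNode D α ψ) :
    ∑ i, (D i * L2sq (G.len i) (deriv (ψ i)) + b / 2 * L2sq (G.len i) (ψ i))
      ≤ (2 * b)⁻¹ * ∑ i, L2sq (G.len i) (h i) := by
  calc ∑ i, (D i * L2sq (G.len i) (deriv (ψ i)) + b / 2 * L2sq (G.len i) (ψ i))
      ≤ ∑ i, ((2 * b)⁻¹ * L2sq (G.len i) (h i)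
          + (D i * deriv (ψ i) (G.len i) * ψ i (G.len i) - D i * deriv (ψ i) 0 * ψ i 0)) :=
        Finset.sum_le_sum fun i _ =>
          energy_le_flux (G.len_pos i).le hb (hψ i) (hh i) (hode i)
    _ ≤ (2 * b)⁻¹ * ∑ i, L2sq (G.len i) (h i) := by
        rw [Finset.sum_add_distrib, ← Finset.mul_sum]
        linarith [G.sum_flux_mul_nonpos hαsym hαnn hbc hnode]

theorem L2sq_deriv_deriv_add_L2sq_deriv_le (hD : ∀ i, 0 < D i) (hb : 0 < b)
    (hαsym : ∀ ν i j, α ν i j = α ν j i) (hαnn : ∀ ν i j, 0 ≤ α ν i j)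
    (hψ : ∀ i, ContDiff ℝ 2 (ψ i)) (hh : ∀ i, Continuous (h i))
    (hode : ∀ i, ∀ x ∈ Set.Icc 0 (G.len i), D i * deriv (deriv (ψ i)) x = h i x + b * ψ i x)
    (hbc : G.OuterZero fun i => deriv (ψ i)) (hnode : G.ParNode D α ψ) (i : M) :
    L2sq (G.len i) (deriv (deriv (ψ i))) + L2sq (G.len i) (deriv (ψ i))
      ≤ (4 / D i ^ 2 + (2 * b * D i)⁻¹) * ∑ j, L2sq (G.len j) (h j) := by
  set H := ∑ j, L2sq (G.len j) (h j)
  have hℓ : ∀ j, 0 ≤ G.len j := fun j => (G.len_pos j).le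
  have hDi := hD i
  have hhi : L2sq (G.len i) (h i) ≤ H :=
    Finset.single_le_sum (fun j _ => L2sq_nonneg (hℓ j) (h j)) (Finset.mem_univ i)
  have henergy : D i * L2sq (G.len i) (deriv (ψ i)) + b / 2 * L2sq (G.len i) (ψ i)
      ≤ (2 * b)⁻¹ * H :=
    (Finset.single_le_sum (f := fun j => D j * L2sq (G.len j) (deriv (ψ j))
        + b / 2 * L2sq (G.len j) (ψ j))
      (fun j _ => add_nonneg (mul_nonneg (hD j).le (L2sq_nonneg (hℓ j) _))
        (mul_nonneg (by positivity) (L2sq_nonneg (hℓ j) _))) (Finset.mem_univ i)).trans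
      (G.sum_energy_le hb hαsym hαnn hψ hh hode hbc hnode)
  have hψ0 := L2sq_nonneg (hℓ i) (ψ i)
  have hψ1 := L2sq_nonneg (hℓ i) (deriv (ψ i))
  have hbound1 : L2sq (G.len i) (deriv (ψ i)) ≤ (2 * b * D i)⁻¹ * H := by
    rw [mul_comm (2 * b), mul_inv, mul_assoc, le_inv_mul_iff₀ hDi]
    nlinarith
  have hbound0 : b ^ 2 * L2sq (G.len i) (ψ i) ≤ H := by
    have := mul_le_mul_of_nonneg_left henergy (by positivity : 0 ≤ 2 * b)
    rw [← mul_assoc, mul_inv_cancel₀ (by positivity), one_mul] at this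
    nlinarith [mul_nonneg (mul_nonneg hb.le hDi.le) hψ1]
  have hbound2 : L2sq (G.len i) (deriv (deriv (ψ i))) ≤ 4 / D i ^ 2 * H := by
    rw [div_mul_eq_mul_div, le_div_iff₀ (by positivity), mul_comm]
    linarith [sq_mul_L2sq_deriv_deriv_le (hℓ i) (hψ i).continuous (hh i) (hode i)]
  linarith

end Network

section Time

theorem continuous_pdt {f : ℝ → ℝ → ℝ} (hf : ContDiff ℝ 1 (Function.uncurry f)) :
    Continuous (Function.uncurry (pdt f)) := by
  have hpdt : ∀ p : ℝ × ℝ, fderiv ℝ (Function.uncurry f) p (1, 0) = pdt f p.1 p.2 := by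
    rintro ⟨t, x⟩
    have hline : HasDerivAt (fun s => (s, x)) ((1 : ℝ), (0 : ℝ)) t :=
      (hasDerivAt_id t).prodMk (hasDerivAt_const t x)
    exact ((hf.differentiable one_ne_zero (t, x)).hasFDerivAt.comp_hasDerivAt t hline).deriv.symm
  exact ((hf.continuous_fderiv one_ne_zero).clm_apply continuous_const).congr hpdt

theorem continuous_L2sq {f : ℝ → ℝ → ℝ} (hf : Continuous (Function.uncurry f)) (ℓ : ℝ) :
    Continuous fun t => L2sq ℓ (f t) :=
  intervalIntegral.continuous_parametric_intervalIntegral_of_continuous'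
    (f := fun t x => f t x ^ 2) ((continuous_pow 2).comp hf) 0 ℓ

variable {T : ℝ} {f g : ℝ → ℝ}

theorem le_supIcc (hf : Continuous f) {t : ℝ} (ht : t ∈ Set.Icc 0 T) : f t ≤ supIcc T f :=
  le_csSup (isCompact_Icc.image hf).bddAbove ⟨t, ht, rfl⟩

theorem supIcc_le (hT : 0 ≤ T) {B : ℝ} (hle : ∀ t ∈ Set.Icc 0 T, f t ≤ B) : supIcc T f ≤ B :=
  csSup_le ((Set.nonempty_Icc.2 hT).image f) (by rintro _ ⟨t, ht, rfl⟩; exact hle t ht)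

theorem supIcc_add_supIcc_le (hT : 0 ≤ T) (hf : ∀ t ∈ Set.Icc 0 T, 0 ≤ f t)
    (hg : ∀ t ∈ Set.Icc 0 T, 0 ≤ g t) {B : ℝ} (hle : ∀ t ∈ Set.Icc 0 T, f t + g t ≤ B) :
    supIcc T f + supIcc T g ≤ 2 * B := by
  have hsupf := supIcc_le hT fun t ht => (le_add_of_nonneg_right (hg t ht)).trans (hle t ht)
  have hsupg := supIcc_le hT fun t ht => (le_add_of_nonneg_left (hf t ht)).trans (hle t ht)
  linarith

end Time

namespace Network.IsSolution

variable {P M : Type} [Fintype M] [DecidableEq P] {G : Network P M}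
  {lam beta D : M → ℝ} {a b : ℝ} {K α : P → M → M → ℝ} {S : Set ℝ} {u v φ : M → ℝ → ℝ → ℝ}

theorem mul_deriv_deriv_phi_eq (sol : G.IsSolution lam beta D a b K α S u v φ) {t : ℝ}
    (ht : t ∈ S) (i : M) (x : ℝ) (hx : x ∈ Set.Icc 0 (G.len i)) :
    D i * deriv (deriv (φ i t)) x = (pdt (φ i) t x - a * u i t x) + b * φ i t x := by
  have hφ := sol.eq_φ i t ht x hx
  rw [pdxx] at hφ
  linarith

theorem L2sq_phi_xx_add_L2sq_phi_x_le [Fintype P] (sol : G.IsSolution lam beta D a b K α S u v φ)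
    (hD : ∀ i, 0 < D i) (hb : 0 < b) (hαsym : ∀ ν i j, α ν i j = α ν j i)
    (hαnn : ∀ ν i j, 0 ≤ α ν i j) {t : ℝ} (ht : t ∈ S) (i : M) :
    L2sq (G.len i) (deriv (deriv (φ i t))) + L2sq (G.len i) (deriv (φ i t))
      ≤ (4 / D i ^ 2 + (2 * b * D i)⁻¹) * ((2 + 2 * a ^ 2)
          * ∑ j, (L2sq (G.len j) (fun x => pdt (φ j) t x) + L2sq (G.len j) (u j t))) := by
  have hφt : ∀ j, Continuous fun x => pdt (φ j) t x := fun j =>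
    (continuous_pdt ((sol.reg_φ j).of_le one_le_two)).uncurry_left t
  have hu : ∀ j, Continuous (u j t) := fun j => (sol.reg_u j).continuous.uncurry_left t
  have hsource : ∑ j, L2sq (G.len j) (fun x => pdt (φ j) t x - a * u j t x)
      ≤ (2 + 2 * a ^ 2)
          * ∑ j, (L2sq (G.len j) (fun x => pdt (φ j) t x) + L2sq (G.len j) (u j t)) := by
    rw [Finset.mul_sum]
    refine Finset.sum_le_sum fun j _ => ?_
    have hℓ := (G.len_pos j).le
    have hsub := L2sq_sub_le (g := fun x => a * u j t x) hℓ (hφt j) (continuous_const.mul (hu j))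
    rw [L2sq_const_mul] at hsub
    nlinarith [L2sq_nonneg hℓ (fun x => pdt (φ j) t x), L2sq_nonneg hℓ (u j t)]
  refine (G.L2sq_deriv_deriv_add_L2sq_deriv_le hD hb hαsym hαnn
    (fun j => (sol.reg_φ j).comp (contDiff_prodMk_right t)) (fun j => (hφt j).sub
    (continuous_const.mul (hu j))) (sol.mul_deriv_deriv_phi_eq ht) (sol.bc_φ t ht)
    (sol.node_φ t ht) i).trans ?_
  exact mul_le_mul_of_nonneg_left hsource (by have := hD i; positivity)

theorem sum_L2sq_le_sum_supIcc (sol : G.IsSolution lam beta D a b K α S u v φ) {T t : ℝ}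
    (ht : t ∈ Set.Icc 0 T) :
    ∑ j, (L2sq (G.len j) (fun x => pdt (φ j) t x) + L2sq (G.len j) (u j t))
      ≤ ∑ j, (supIcc T (fun t => L2sq (G.len j) (fun x => pdt (φ j) t x))
          + supIcc T (fun t => L2sq (G.len j) (u j t))) :=
  Finset.sum_le_sum fun j _ => add_le_add
    (le_supIcc (continuous_L2sq (continuous_pdt ((sol.reg_φ j).of_le one_le_two)) _) ht)
    (le_supIcc (continuous_L2sq (sol.reg_u j).continuous _) ht)

end Network.IsSolution

theorem apriori_phixx_estimate_general
    {P M : Type} [Fintype P] [Fintype M] [DecidableEq P]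
    (G : Network P M) (lam beta D : M → ℝ) (a b : ℝ) (K α : P → M → M → ℝ)
    (hD : ∀ i, 0 < D i) (hb : 0 < b)
    (hαsym : ∀ ν i j, α ν i j = α ν j i) (hαnn : ∀ ν i j, 0 ≤ α ν i j)
    :
    ∃ C > 0, ∀ T > 0, ∀ u v φ : M → ℝ → ℝ → ℝ,
      G.IsSolution lam beta D a b K α (Set.Icc 0 T) u v φ →
      ∑ i, (supIcc T (fun t => L2sq (G.len i) (deriv (deriv (φ i t))))
          + supIcc T (fun t => L2sq (G.len i) (deriv (φ i t)))) ≤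
      C * ∑ i, (supIcc T (fun t => L2sq (G.len i) (fun x => pdt (φ i) t x))
          + supIcc T (fun t => L2sq (G.len i) (u i t))) := by
  set c := ∑ i, (4 / D i ^ 2 + (2 * b * D i)⁻¹)
  have hc : 0 ≤ c := Finset.sum_nonneg fun i _ => by have := hD i; positivity
  refine ⟨2 * (2 + 2 * a ^ 2) * c + 1, by positivity, fun T hT u v φ sol => ?_⟩
  have hℓ : ∀ i, 0 ≤ G.len i := fun i => (G.len_pos i).le
  set R := ∑ i, (supIcc T (fun t => L2sq (G.len i) (fun x => pdt (φ i) t x))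
    + supIcc T (fun t => L2sq (G.len i) (u i t)))
  have hR : ∀ t ∈ Set.Icc 0 T,
      ∑ j, (L2sq (G.len j) (fun x => pdt (φ j) t x) + L2sq (G.len j) (u j t)) ≤ R :=
    fun t ht => sol.sum_L2sq_le_sum_supIcc ht
  have hR0 : 0 ≤ R := (Finset.sum_nonneg fun j _ => add_nonneg (L2sq_nonneg (hℓ j) _)
    (L2sq_nonneg (hℓ j) _)).trans (hR 0 ⟨le_rfl, hT.le⟩)
  have harc : ∀ i, supIcc T (fun t => L2sq (G.len i) (deriv (deriv (φ i t))))
      + supIcc T (fun t => L2sq (G.len i) (deriv (φ i t)))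
      ≤ 2 * ((4 / D i ^ 2 + (2 * b * D i)⁻¹) * ((2 + 2 * a ^ 2) * R)) := fun i =>
    supIcc_add_supIcc_le hT.le (fun _ _ => L2sq_nonneg (hℓ i) _) (fun _ _ => L2sq_nonneg (hℓ i) _)
      fun t ht => (sol.L2sq_phi_xx_add_L2sq_phi_x_le hD hb hαsym hαnn ht i).trans
        (mul_le_mul_of_nonneg_left (mul_le_mul_of_nonneg_left (hR t ht) (by positivity))
          (by have := hD i; positivity))
  calc _ ≤ ∑ i, 2 * ((4 / D i ^ 2 + (2 * b * D i)⁻¹) * ((2 + 2 * a ^ 2) * R)) :=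
        Finset.sum_le_sum fun i _ => harc i
    _ = 2 * (2 + 2 * a ^ 2) * c * R := by
        rw [← Finset.mul_sum, ← Finset.sum_mul]
        ring
    _ ≤ _ := by linarith

/-- **A priori estimate for `∂_{xx} φ` and `∂_x φ` (Proposition 5.7).**
For any local (classical) solution of the chemotaxis system on the network `G`
on `[0, T]`:
`∑_i ( sup ‖∂_{xx} φ_i‖₂² + sup ‖∂_x φ_i‖₂² )
 ≤ C ∑_i ( sup ‖∂_t φ_i‖₂² + sup ‖u_i‖₂² )`,
where `C > 0` depends only on the parameters of the problem. -/
theorem apriori_phixx_estimate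
    {P M : Type} [Fintype P] [Fintype M] [DecidableEq P] [DecidableEq M]
    (G : Network P M) (lam beta D : M → ℝ) (a b : ℝ) (K α : P → M → M → ℝ)
    (hlam : ∀ i, 0 ≤ lam i) (hbeta : ∀ i, 0 < beta i) (hD : ∀ i, 0 < D i)
    (ha : 0 ≤ a) (hb : 0 < b)
    (hKsym : ∀ ν i j, K ν i j = K ν j i) (hKnn : ∀ ν i j, 0 ≤ K ν i j)
    (hαsym : ∀ ν i j, α ν i j = α ν j i) (hαnn : ∀ ν i j, 0 ≤ α ν i j)
    :
    ∃ C > 0, ∀ T > 0, ∀ u v φ : M → ℝ → ℝ → ℝ,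
      G.IsSolution lam beta D a b K α (Set.Icc 0 T) u v φ →
      ∑ i, (supIcc T (fun t => L2sq (G.len i) (deriv (deriv (φ i t))))
          + supIcc T (fun t => L2sq (G.len i) (deriv (φ i t)))) ≤
      C * ∑ i, (supIcc T (fun t => L2sq (G.len i) (fun x => pdt (φ i) t x))
          + supIcc T (fun t => L2sq (G.len i) (u i t))) :=
  apriori_phixx_estimate_general G lam beta D a b K α hD hb hαsym hαnn
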